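/- Gonchar's Lemma, part (i): if a sequence of functions φₙ holomorphic on a domain D ⊂ ℂ converges in σ-content on compact subsets of D to a function φ, then {φₙ} converges uniformly on compact subsets of D, and the limit is holomorphic in D (equal to φ except possibly on a set of 1-dimensional Hausdorff content zero). -/

import Mathlib

/-!
The image of a set `E` under `w ↦ |w - z|` has Lebesgue measure at most `2 σ(E)`, so a set of
small σ-content misses the circle `|w - z| = ρ` for some `ρ` in any interval longer than `2 σ(E)`.
Off the sets where `φₘ` or `φₙ` is far from `φ`, the difference `φₘ - φₙ` is small, hence small on
such a circle, and by the maximum modulus principle also at its centre: the sequence is uniformly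
Cauchy on compact sets. Its limit `ψ` is holomorphic, and on a compact set `{|ψ - φ| > ε}` lies in
`{|φₙ - φ| > ε / 2}` for all large `n`, whose σ-content tends to zero.
-/

open Polynomial Filter Set
open scoped ENNReal NNReal Topology Classical

noncomputable section

/-- 1-dimensional Hausdorff content: infimum of sums of radii over countable disk covers. -/
def sigmaContent (B : Set ℂ) : ℝ≥0∞ :=
  ⨅ (c : ℕ → ℂ) (r : ℕ → ℝ≥0) (_ : B ⊆ ⋃ i, Metric.closedBall (c i) (r i)),
    ∑' i, (r i : ℝ≥0∞)

/-- Convergence in σ-content on compact subsets of `D`. -/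
def SigmaConvOn (φn : ℕ → ℂ → ℂ) (φ : ℂ → ℂ) (D : Set ℂ) : Prop :=
  ∀ K ⊆ D, IsCompact K → ∀ ε : ℝ, 0 < ε →
    Tendsto (fun n => sigmaContent {z ∈ K | ε < ‖φn n z - φ z‖}) atTop (𝓝 0)

/-- The order of `a` as a pole of `f` (0 if `f` is not meromorphic at `a` or has no pole
there). -/
def poleOrd (f : ℂ → ℂ) (a : ℂ) : ℕ :=
  if h : MeromorphicAt f a then (-(WithTop.untopD 0 (meromorphicOrderAt f a))).toNat else 0

/-- `F` has at most `k` poles, counting multiplicities, in `D`. -/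
def AtMostPoles (F : ℂ → ℂ) (D : Set ℂ) (k : ℕ) : Prop :=
  ∀ S : Finset ℂ, ↑S ⊆ D → ∑ a ∈ S, poleOrd F a ≤ k

open Metric MeasureTheory

lemma sigmaContent_le_of_subset_iUnion {B : Set ℂ} {c : ℕ → ℂ} {r : ℕ → ℝ≥0}
    (h : B ⊆ ⋃ i, closedBall (c i) (r i)) : sigmaContent B ≤ ∑' i, (r i : ℝ≥0∞) :=
  iInf_le_of_le c (iInf_le_of_le r (iInf_le _ h))

lemma exists_subset_iUnion_closedBall_of_sigmaContent_lt {B : Set ℂ} {t : ℝ≥0∞}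
    (h : sigmaContent B < t) :
    ∃ (c : ℕ → ℂ) (r : ℕ → ℝ≥0), B ⊆ ⋃ i, closedBall (c i) (r i) ∧ ∑' i, (r i : ℝ≥0∞) < t := by
  simpa only [sigmaContent, iInf_lt_iff, exists_prop] using h

lemma sigmaContent_iUnion_le (A : ℕ → Set ℂ) :
    sigmaContent (⋃ n, A n) ≤ ∑' n, sigmaContent (A n) := by
  refine ENNReal.le_of_forall_pos_le_add fun ε hε hA => ?_
  obtain ⟨δ, hδ, hδε⟩ := ENNReal.exists_pos_sum_of_countable (ENNReal.coe_ne_zero.mpr hε.ne') ℕ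
  have hlt n : sigmaContent (A n) < sigmaContent (A n) + δ n :=
    ENNReal.lt_add_right ((ENNReal.le_tsum n).trans_lt hA).ne (ENNReal.coe_ne_zero.mpr (hδ n).ne')
  choose c r hcov hsum using fun n => exists_subset_iUnion_closedBall_of_sigmaContent_lt (hlt n)
  have hcov' : (⋃ n, A n) ⊆ ⋃ i, closedBall (c (Nat.unpair i).1 (Nat.unpair i).2)
      (r (Nat.unpair i).1 (Nat.unpair i).2) := by
    refine iUnion_subset fun n z hz => ?_
    obtain ⟨i, hi⟩ := mem_iUnion.mp (hcov n hz)
    exact mem_iUnion.mpr ⟨Nat.pair n i, by rwa [Nat.unpair_pair]⟩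
  calc sigmaContent (⋃ n, A n)
      ≤ ∑' i, (r (Nat.unpair i).1 (Nat.unpair i).2 : ℝ≥0∞) := sigmaContent_le_of_subset_iUnion hcov'
    _ = ∑' p : ℕ × ℕ, (r p.1 p.2 : ℝ≥0∞) := Nat.pairEquiv.symm.tsum_eq fun p => (r p.1 p.2 : ℝ≥0∞)
    _ = ∑' n, ∑' i, (r n i : ℝ≥0∞) := ENNReal.tsum_prod'
    _ ≤ ∑' n, (sigmaContent (A n) + δ n) := ENNReal.tsum_le_tsum fun n => (hsum n).le
    _ = ∑' n, sigmaContent (A n) + ∑' n, (δ n : ℝ≥0∞) := ENNReal.tsum_add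
    _ ≤ ∑' n, sigmaContent (A n) + ε := add_le_add_right hδε.le _

def sigmaContentOuterMeasure : OuterMeasure ℂ where
  measureOf := sigmaContent
  empty := nonpos_iff_eq_zero.mp <| by
    simpa using sigmaContent_le_of_subset_iUnion (c := 0) (r := 0) (empty_subset _)
  mono h := le_iInf fun _ => le_iInf₂ fun _ hc => sigmaContent_le_of_subset_iUnion (h.trans hc)
  iUnion_nat A _ := sigmaContent_iUnion_le A

@[simp]
lemma sigmaContentOuterMeasure_apply (B : Set ℂ) : sigmaContentOuterMeasure B = sigmaContent B :=
  rfl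

lemma LipschitzWith.volume_image_le_two_mul_sigmaContent {f : ℂ → ℝ} (hf : LipschitzWith 1 f)
    (E : Set ℂ) : volume (f '' E) ≤ 2 * sigmaContent E := by
  refine le_of_forall_gt fun t ht => ?_
  rw [mul_comm, ← ENNReal.lt_div_iff_mul_lt (by norm_num) (by norm_num)] at ht
  obtain ⟨c, r, hcov, hsum⟩ := exists_subset_iUnion_closedBall_of_sigmaContent_lt ht
  have himage : f '' E ⊆ ⋃ i, closedBall (f (c i)) (r i) := by
    rintro _ ⟨w, hw, rfl⟩
    obtain ⟨i, hi⟩ := mem_iUnion.mp (hcov hw)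
    exact mem_iUnion.mpr ⟨i, by simpa using hf.mapsTo_closedBall (c i) (r i) hi⟩
  calc volume (f '' E) ≤ ∑' i, volume (closedBall (f (c i)) (r i)) :=
        (measure_mono himage).trans (measure_iUnion_le _)
    _ = 2 * ∑' i, (r i : ℝ≥0∞) := by
        simp_rw [Real.volume_closedBall, ENNReal.ofReal_mul zero_le_two, ENNReal.ofReal_coe_nnreal,
          ENNReal.ofReal_ofNat, ENNReal.tsum_mul_left]
    _ < 2 * (t / 2) := (ENNReal.mul_lt_mul_iff_right (by norm_num) (by norm_num)).mpr hsum
    _ = t := ENNReal.mul_div_cancel' (by norm_num) (by norm_num)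

lemma exists_sphere_disjoint_of_two_mul_sigmaContent_lt {E : Set ℂ} (z : ℂ) {r : ℝ}
    (h : 2 * sigmaContent E < ENNReal.ofReal r) : ∃ ρ ∈ Ioo 0 r, Disjoint (sphere z ρ) E := by
  have hnot : ¬ Ioo 0 r ⊆ (dist · z) '' E := fun hsub =>
    ((measure_mono hsub).trans ((LipschitzWith.dist_left z).volume_image_le_two_mul_sigmaContent E)
      ).not_gt (by simpa using h)
  obtain ⟨ρ, hρ, hρE⟩ := not_subset.mp hnot
  exact ⟨ρ, hρ, disjoint_left.mpr fun w hw hwE => hρE ⟨w, hwE, hw⟩⟩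

theorem SigmaConvOn.uniformCauchySeqOn {f : ℕ → ℂ → ℂ} {φ : ℂ → ℂ} {U K : Set ℂ}
    (hconv : SigmaConvOn f φ U) (hU : IsOpen U) (hf : ∀ n, DifferentiableOn ℂ (f n) U)
    (hKU : K ⊆ U) (hK : IsCompact K) : UniformCauchySeqOn f atTop K := by
  obtain ⟨δ, hδ, hKδ⟩ := hK.exists_cthickening_subset_open hU hKU
  rw [Metric.uniformCauchySeqOn_iff]
  intro ε hε
  set bad : ℕ → Set ℂ := fun n => {w ∈ cthickening δ K | ε / 3 < ‖f n w - φ w‖}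
  have hsmall : ∀ᶠ n in atTop, 2 * sigmaContent (bad n) < ENNReal.ofReal δ / 2 := by
    have h0 : Tendsto (fun n => 2 * sigmaContent (bad n)) atTop (𝓝 0) := by
      simpa only [mul_zero] using ENNReal.Tendsto.const_mul
        (hconv _ hKδ hK.cthickening (ε / 3) (by positivity)) (.inr (by norm_num))
    exact h0.eventually_lt_const (ENNReal.half_pos (ENNReal.ofReal_pos.mpr hδ).ne')
  obtain ⟨N, hN⟩ := eventually_atTop.mp hsmall
  refine ⟨N, fun m hm n hn z hz => ?_⟩
  have hbad : 2 * sigmaContent (bad m ∪ bad n) < ENNReal.ofReal δ :=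
    calc 2 * sigmaContent (bad m ∪ bad n)
        ≤ 2 * sigmaContent (bad m) + 2 * sigmaContent (bad n) := by
          rw [← mul_add]
          gcongr
          simpa using measure_union_le (μ := sigmaContentOuterMeasure) (bad m) (bad n)
      _ < ENNReal.ofReal δ / 2 + ENNReal.ofReal δ / 2 := ENNReal.add_lt_add (hN m hm) (hN n hn)
      _ = ENNReal.ofReal δ := ENNReal.add_halves _
  obtain ⟨ρ, ⟨hρ, hρδ⟩, hρbad⟩ := exists_sphere_disjoint_of_two_mul_sigmaContent_lt z hbad
  have hball : closedBall z ρ ⊆ cthickening δ K :=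
    (closedBall_subset_closedBall hρδ.le).trans (closedBall_subset_cthickening hz δ)
  have hsphere : ∀ w ∈ sphere z ρ, ‖(f m - f n) w‖ ≤ 2 * (ε / 3) := by
    intro w hw
    have hwK := hball (sphere_subset_closedBall hw)
    have hm : ‖f m w - φ w‖ ≤ ε / 3 := not_lt.mp fun h => disjoint_left.mp hρbad hw (.inl ⟨hwK, h⟩)
    have hn : ‖f n w - φ w‖ ≤ ε / 3 := not_lt.mp fun h => disjoint_left.mp hρbad hw (.inr ⟨hwK, h⟩)
    calc ‖(f m - f n) w‖ = ‖(f m w - φ w) - (f n w - φ w)‖ := by simp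
      _ ≤ 2 * (ε / 3) := (norm_sub_le _ _).trans (by linarith)
  have hdiff : DiffContOnCl ℂ (f m - f n) (ball z ρ) :=
    ((hf m).sub (hf n)).diffContOnCl_ball (hball.trans hKδ)
  rw [dist_eq_norm]
  -- Cauchy's estimate for the `0`-th derivative is the maximum modulus bound on the circle.
  calc ‖f m z - f n z‖ ≤ 2 * (ε / 3) := by
        simpa using Complex.norm_iteratedDeriv_le_of_forall_mem_sphere_norm_le 0 hρ hdiff hsphere
    _ < ε := by linarith

lemma exists_tendstoUniformlyOn_of_uniformCauchySeqOn {ι α β : Type*} [UniformSpace β]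
    [CompleteSpace β] [Nonempty β] {F : ι → α → β} {p : Filter ι} [p.NeBot] {𝔖 : Set (Set α)}
    (h : ∀ K ∈ 𝔖, UniformCauchySeqOn F p K) : ∃ g : α → β, ∀ K ∈ 𝔖, TendstoUniformlyOn F g p K :=
  ⟨fun z => limUnder p (F · z), fun K hK => (h K hK).tendstoUniformlyOn_of_tendsto fun _ hz =>
    tendsto_nhds_limUnder (CompleteSpace.complete ((h K hK).cauchy_map hz))⟩

lemma SigmaConvOn.sigmaContent_setOf_ne_eq_zero_of_isCompact {f : ℕ → ℂ → ℂ} {φ ψ : ℂ → ℂ}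
    {U K : Set ℂ} (hconv : SigmaConvOn f φ U) (hKU : K ⊆ U) (hK : IsCompact K)
    (hψ : TendstoUniformlyOn f ψ atTop K) : sigmaContent {z ∈ K | ψ z ≠ φ z} = 0 := by
  have hlevel (ε : ℝ) (hε : 0 < ε) : sigmaContent {z ∈ K | ε < ‖ψ z - φ z‖} = 0 := by
    refine nonpos_iff_eq_zero.mp (ge_of_tendsto (hconv K hKU hK (ε / 2) (half_pos hε)) ?_)
    filter_upwards [Metric.tendstoUniformlyOn_iff.mp hψ (ε / 2) (half_pos hε)] with n hn
    refine sigmaContentOuterMeasure.mono ?_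
    rintro z ⟨hzK, hz⟩
    refine ⟨hzK, ?_⟩
    have hψf := hn z hzK
    rw [dist_eq_norm] at hψf
    calc ε / 2 < ‖ψ z - φ z‖ - ‖ψ z - f n z‖ := by linarith
      _ ≤ ‖(ψ z - φ z) - (ψ z - f n z)‖ := norm_sub_norm_le _ _
      _ = ‖f n z - φ z‖ := by ring_nf
  have hcover : {z ∈ K | ψ z ≠ φ z} ⊆ ⋃ k : ℕ, {z ∈ K | 1 / (k + 1 : ℝ) < ‖ψ z - φ z‖} := by
    rintro z ⟨hzK, hz⟩
    obtain ⟨k, hk⟩ := exists_nat_one_div_lt (norm_sub_pos_iff.mpr hz)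
    exact mem_iUnion.mpr ⟨k, hzK, hk⟩
  exact measure_mono_null (μ := sigmaContentOuterMeasure) hcover
    (measure_iUnion_null fun k => hlevel _ Nat.one_div_pos_of_nat)

theorem SigmaConvOn.sigmaContent_setOf_ne_eq_zero {f : ℕ → ℂ → ℂ} {φ ψ : ℂ → ℂ} {U : Set ℂ}
    (hconv : SigmaConvOn f φ U) (hU : IsOpen U)
    (hψ : ∀ K ⊆ U, IsCompact K → TendstoUniformlyOn f ψ atTop K) :
    sigmaContent {z ∈ U | ψ z ≠ φ z} = 0 := by
  have : LocallyCompactSpace U := hU.locallyCompactSpace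
  have hUσ : IsSigmaCompact U := isSigmaCompact_iff_sigmaCompactSpace.mpr inferInstance
  obtain ⟨K, hK, hKU⟩ := hUσ
  have hsub n : K n ⊆ U := hKU ▸ subset_iUnion K n
  have hU_eq : {z ∈ U | ψ z ≠ φ z} = ⋃ n, {z ∈ K n | ψ z ≠ φ z} := by
    rw [← hKU]
    ext z
    simp
  rw [hU_eq]
  exact measure_iUnion_null (μ := sigmaContentOuterMeasure) fun n =>
    hconv.sigmaContent_setOf_ne_eq_zero_of_isCompact (hsub n) (hK n) (hψ _ (hsub n) (hK n))

theorem gonchar_lemma_i_general (D : Set ℂ) (hD : IsOpen D)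
    (φn : ℕ → ℂ → ℂ) (φ : ℂ → ℂ) (hφn : ∀ n, AnalyticOnNhd ℂ (φn n) D)
    (hconv : SigmaConvOn φn φ D) :
    ∃ ψ : ℂ → ℂ, AnalyticOnNhd ℂ ψ D ∧
      (∀ K ⊆ D, IsCompact K → TendstoUniformlyOn φn ψ atTop K) ∧
      sigmaContent {z ∈ D | ψ z ≠ φ z} = 0 := by
  have hdiff n : DifferentiableOn ℂ (φn n) D := (hφn n).differentiableOn
  obtain ⟨ψ, hψ⟩ := exists_tendstoUniformlyOn_of_uniformCauchySeqOn
    (𝔖 := {K | K ⊆ D ∧ IsCompact K}) fun K hK => hconv.uniformCauchySeqOn hD hdiff hK.1 hK.2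
  have hunif : ∀ K ⊆ D, IsCompact K → TendstoUniformlyOn φn ψ atTop K :=
    fun K hKD hK => hψ K ⟨hKD, hK⟩
  have hloc := (tendstoLocallyUniformlyOn_iff_forall_isCompact hD).mpr hunif
  exact ⟨ψ, (hloc.differentiableOn (.of_forall hdiff) hD).analyticOnNhd hD, hunif,
    hconv.sigmaContent_setOf_ne_eq_zero hD hunif⟩

/-- Gonchar's Lemma, part (i): a sequence of holomorphic functions on a domain `D` converging
in σ-content on compact subsets of `D` converges uniformly on compact subsets of `D` to a
holomorphic function, which equals the σ-limit off a set of σ-content zero. -/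
theorem gonchar_lemma_i (D : Set ℂ) (hD : IsOpen D) (hDc : IsConnected D)
    (φn : ℕ → ℂ → ℂ) (φ : ℂ → ℂ) (hφn : ∀ n, AnalyticOnNhd ℂ (φn n) D)
    (hconv : SigmaConvOn φn φ D) :
    ∃ ψ : ℂ → ℂ, AnalyticOnNhd ℂ ψ D ∧
      (∀ K ⊆ D, IsCompact K → TendstoUniformlyOn φn ψ atTop K) ∧
      sigmaContent {z ∈ D | ψ z ≠ φ z} = 0 :=
  gonchar_lemma_i_general D hD φn φ hφn hconv
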